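/- Let w ∈ B_∞(𝔻) with parameters α, β ∈ (0,1). Then there is a constant C = C(w) such that for every Carleson box Q and every λ > 1/w_Q, one has |Q ∩ {1/m_Q w > λ}| ≤ (Cλ/(1-β))·w(Q ∩ {1/w > λα}), where w_Q is the average of w over Q. -/

import Mathlib

open MeasureTheory Set
open scoped ENNReal NNReal

noncomputable section

/-- The open unit disc in `ℂ`. -/
def unitDisc : Set ℂ := {z : ℂ | ‖z‖ < 1}

/-- The Carleson box of the arc of the unit circle starting at angle `a`
(measured in full turns) and of (normalized) length `ℓ`:
`Q_I = { z ∈ 𝔻 : z/|z| ∈ I, 1-|I| < |z| < 1 }`. -/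
def box (a ℓ : ℝ) : Set ℂ :=
  {z : ℂ | 1 - ℓ < ‖z‖ ∧ ‖z‖ < 1 ∧
    ∃ θ ∈ Set.Ico a (a + ℓ),
      z = (‖z‖ : ℂ) * Complex.exp (2 * Real.pi * θ * Complex.I)}

/-- The dyadic subarc of generation `k`, position `j`, of the arc `[a, a+ℓ)`,
viewed as an interval of angles. -/
def dyadicArc (a ℓ : ℝ) (k j : ℕ) : Set ℝ :=
  Set.Ico (a + j * ℓ / 2 ^ k) (a + (j + 1) * ℓ / 2 ^ k)

/-- The Carleson box of the dyadic subarc of generation `k`, position `j`. -/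
def dyadicBox (a ℓ : ℝ) (k j : ℕ) : Set ℂ :=
  box (a + j * ℓ / 2 ^ k) (ℓ / 2 ^ k)

/-- `∫_S w` (of the nonnegative part of `w`), as an extended nonnegative real. -/
def wInt (w : ℂ → ℝ) (S : Set ℂ) : ℝ≥0∞ :=
  ∫⁻ x in S, ENNReal.ofReal (w x)

/-- `ℝ≥0∞`-valued average of `w` over `S` (Lebesgue measure). -/
def avgE (w : ℂ → ℝ) (S : Set ℂ) : ℝ≥0∞ := wInt w S / volume S

/-- Real-valued average of `f` over `S` (Lebesgue measure). -/
def avgR (f : ℂ → ℝ) (S : Set ℂ) : ℝ := (∫ x in S, f x) / (volume S).toReal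

/-- `ℝ≥0∞`-valued `μ`-average of `f` over `S`. -/
def muAvg (μ : Measure ℂ) (f : ℂ → ℝ) (S : Set ℂ) : ℝ≥0∞ :=
  (∫⁻ y in S, ENNReal.ofReal (f y) ∂μ) / μ S

/-- The dyadic maximal function of `w` relative to the Carleson box `box a ℓ`. -/
def dyadicMaxE (a ℓ : ℝ) (w : ℂ → ℝ) (x : ℂ) : ℝ≥0∞ :=
  ⨆ (k : ℕ) (j : ℕ) (_ : j < 2 ^ k) (_ : x ∈ dyadicBox a ℓ k j),
    avgE w (dyadicBox a ℓ k j)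

/-- The dyadic minimal function of `w` relative to the Carleson box `box a ℓ`. -/
def dyadicMinE (a ℓ : ℝ) (w : ℂ → ℝ) (x : ℂ) : ℝ≥0∞ :=
  ⨅ (k : ℕ) (j : ℕ) (_ : j < 2 ^ k) (_ : x ∈ dyadicBox a ℓ k j),
    avgE w (dyadicBox a ℓ k j)

/-- The real-valued dyadic minimal function of `w` relative to `box a ℓ`. -/
def dyadicMinR (a ℓ : ℝ) (w : ℂ → ℝ) (x : ℂ) : ℝ :=
  sInf {t : ℝ | ∃ k j : ℕ, j < 2 ^ k ∧ x ∈ dyadicBox a ℓ k j ∧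
    t = avgR w (dyadicBox a ℓ k j)}

/-- The dyadic `μ`-maximal function of `f` relative to the box `box a ℓ`. -/
def dyadicMaxMu (μ : Measure ℂ) (a ℓ : ℝ) (f : ℂ → ℝ) (x : ℂ) : ℝ≥0∞ :=
  ⨆ (k : ℕ) (j : ℕ) (_ : j < 2 ^ k) (_ : x ∈ dyadicBox a ℓ k j),
    muAvg μ f (dyadicBox a ℓ k j)

/-- The maximal function over all Carleson boxes. -/
def globalMaxE (w : ℂ → ℝ) (x : ℂ) : ℝ≥0∞ :=
  ⨆ (b : ℝ) (m : ℝ) (_ : 0 < m) (_ : m ≤ 1) (_ : x ∈ box b m), avgE w (box b m)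

/-- A weight in the disc: integrable, and positive a.e. -/
def IsWeight (w : ℂ → ℝ) : Prop :=
  IntegrableOn w unitDisc ∧ ∀ᵐ x ∂(volume.restrict unitDisc), 0 < w x

/-- `w` is a doubling weight with constant `C`:
`w(Q_I) ≤ C ⬝ w(Q_{(1/2)I})` for all arcs `I`. -/
def IsDoublingWeight (w : ℂ → ℝ) (C : ℝ≥0∞) : Prop :=
  ∀ a ℓ : ℝ, 0 < ℓ → ℓ ≤ 1 →
    wInt w (box a ℓ) ≤ C * wInt w (box (a + ℓ / 4) (ℓ / 2))

/-- A measure `μ` dominates each dyadic child box with constant `C`. -/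
def ChildDoubling (μ : Measure ℂ) (C : ℝ≥0∞) : Prop :=
  ∀ a ℓ : ℝ, 0 < ℓ → ℓ ≤ 1 →
    μ (box a ℓ) ≤ C * μ (box a (ℓ / 2)) ∧
    μ (box a ℓ) ≤ C * μ (box (a + ℓ / 2) (ℓ / 2))

/-- The Békollé–Bonami `B_∞` condition with parameters `α`, `β`. -/
def BInfty (w : ℂ → ℝ) (α β : ℝ) : Prop :=
  ∀ a ℓ : ℝ, 0 < ℓ → ℓ ≤ 1 → ∀ E : Set ℂ, MeasurableSet E → E ⊆ box a ℓ →
    volume E ≤ ENNReal.ofReal α * volume (box a ℓ) →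
    wInt w E ≤ ENNReal.ofReal β * wInt w (box a ℓ)

/-- The Fujii–Wilson condition with constant `L`. -/
def FujiiWilson (w : ℂ → ℝ) (L : ℝ) : Prop :=
  ∀ a ℓ : ℝ, 0 < ℓ → ℓ ≤ 1 →
    (∫⁻ x in box a ℓ, globalMaxE ((box a ℓ).indicator w) x) ≤
      ENNReal.ofReal L * wInt w (box a ℓ)

/-- Condition `(M dw)`: `w({x ∈ Q : w(x) ≥ A⬝M_Q w(x)}) ≤ b⬝w(Q)` for all `Q`. -/
def MdwCond (w : ℂ → ℝ) (A b : ℝ) : Prop :=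
  ∀ a ℓ : ℝ, 0 < ℓ → ℓ ≤ 1 →
    wInt w {x ∈ box a ℓ |
        ENNReal.ofReal A * dyadicMaxE a ℓ w x ≤ ENNReal.ofReal (w x)} ≤
      ENNReal.ofReal b * wInt w (box a ℓ)

/-- The reverse Hölder inequality with exponent `p` and constant `C`. -/
def RHI (w : ℂ → ℝ) (p C : ℝ) : Prop :=
  ∀ a ℓ : ℝ, 0 < ℓ → ℓ ≤ 1 →
    (∫⁻ x in box a ℓ, ENNReal.ofReal (w x) ^ p) / volume (box a ℓ) ≤
      ENNReal.ofReal C * (avgE w (box a ℓ)) ^ p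

/-- Condition `(ML^p)` at a single exponent `p`, with constant `C`:
`∫_Q w^p ≤ C ∫_Q (M_Q w)^p` for all Carleson boxes `Q`. -/
def MLp (w : ℂ → ℝ) (p C : ℝ) : Prop :=
  ∀ a ℓ : ℝ, 0 < ℓ → ℓ ≤ 1 →
    (∫⁻ x in box a ℓ, ENNReal.ofReal (w x) ^ p) ≤
      ENNReal.ofReal C * ∫⁻ x in box a ℓ, dyadicMaxE a ℓ w x ^ p


section AuxLemmas

open scoped Real

lemma box_subset_unitDisc (a ℓ : ℝ) : box a ℓ ⊆ unitDisc := fun _ hz => hz.2.1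

lemma box_subset_box {a ℓ b m : ℝ} (h1 : a ≤ b) (h2 : b + m ≤ a + ℓ) :
    box b m ⊆ box a ℓ := by
  have hm : m ≤ ℓ := by linarith
  rintro z ⟨hr1, hr2, θ, hθ, hz⟩
  exact ⟨by linarith, hr2, θ, ⟨le_trans h1 hθ.1, lt_of_lt_of_le hθ.2 h2⟩, hz⟩

lemma abs_pos_of_mem_box {a ℓ : ℝ} (hℓ1 : ℓ ≤ 1) {z : ℂ} (hz : z ∈ box a ℓ) :
    0 < ‖z‖ := by
  rcases lt_or_eq_of_le hℓ1 with h | h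
  · have := hz.1; linarith
  · rcases (norm_nonneg z).lt_or_eq with h' | h'
    · exact h'
    · exfalso; have := hz.1; rw [← h', h] at this; linarith

lemma boxEq {a ℓ : ℝ} (hℓ : 0 < ℓ) (hℓ1 : ℓ ≤ 1) :
    box a ℓ = {z : ℂ | 1 - ℓ < ‖z‖ ∧ ‖z‖ < 1 ∧
      Int.fract (Complex.arg z / (2 * Real.pi) - a) < ℓ} := by
  have hpi : (0:ℝ) < 2 * Real.pi := by positivity
  ext z
  simp only [box, mem_setOf_eq]
  constructor
  · rintro ⟨h1, h2, θ, hθ, hz⟩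
    refine ⟨h1, h2, ?_⟩
    have hz0 : (0:ℝ) < ‖z‖ := abs_pos_of_mem_box hℓ1 ⟨h1, h2, θ, hθ, hz⟩
    have hz0' : ((‖z‖ : ℝ) : ℂ) ≠ 0 := by exact_mod_cast hz0.ne'
    have hzz : (‖z‖ : ℂ) * Complex.exp (Complex.arg z * Complex.I) = z :=
      Complex.norm_mul_exp_arg_mul_I z
    have hexp : Complex.exp (2 * Real.pi * θ * Complex.I)
        = Complex.exp (Complex.arg z * Complex.I) :=
      mul_left_cancel₀ hz0' (hz.symm.trans hzz.symm)
    rw [Complex.exp_eq_exp_iff_exists_int] at hexp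
    obtain ⟨n, hn⟩ := hexp
    have hn' : 2 * Real.pi * θ = Complex.arg z + n * (2 * Real.pi) := by
      have h2' : (2 * Real.pi * θ : ℂ) * Complex.I =
          ((Complex.arg z + n * (2 * Real.pi) : ℝ) : ℂ) * Complex.I := by
        push_cast; rw [hn]; ring
      exact_mod_cast mul_right_cancel₀ Complex.I_ne_zero h2'
    have hθa : θ - a ∈ Set.Ico (0:ℝ) 1 := ⟨by linarith [hθ.1], by linarith [hθ.2]⟩
    have hfr : Complex.arg z / (2 * Real.pi) - a = θ - a + ((-n : ℤ) : ℝ) := by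
      have : Complex.arg z = 2 * Real.pi * θ - n * (2 * Real.pi) := by linarith
      rw [this]; push_cast; field_simp; ring
    rw [hfr, Int.fract_add_intCast, Int.fract_eq_self.mpr hθa]
    linarith [hθ.2]
  · rintro ⟨h1, h2, h3⟩
    refine ⟨h1, h2, ?_⟩
    set t := Complex.arg z / (2 * Real.pi) - a with ht
    refine ⟨a + Int.fract t, ⟨by linarith [Int.fract_nonneg t], by linarith⟩, ?_⟩
    have key : 2 * Real.pi * (a + Int.fract t) = Complex.arg z - ⌊t⌋ * (2 * Real.pi) := by
      have hf : Int.fract t = t - ⌊t⌋ := rfl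
      rw [hf, ht]
      field_simp
      ring
    have hexp : Complex.exp (2 * Real.pi * (a + Int.fract t) * Complex.I)
        = Complex.exp (Complex.arg z * Complex.I) := by
      rw [show (2 * Real.pi * ((a : ℂ) + (Int.fract t : ℝ)) * Complex.I)
          = ((2 * Real.pi * (a + Int.fract t) : ℝ) : ℂ) * Complex.I by push_cast; ring]
      rw [key]
      push_cast
      rw [sub_mul, Complex.exp_sub]
      rw [show ((⌊t⌋ : ℂ) * (2 * Real.pi) * Complex.I) = (⌊t⌋ : ℤ) * (2 * Real.pi * Complex.I) by
        push_cast; ring]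
      rw [Complex.exp_int_mul_two_pi_mul_I, div_one]
    rw [show ((a + Int.fract t : ℝ) : ℂ) = (a : ℂ) + (Int.fract t : ℝ) by push_cast; ring]
    rw [hexp]
    exact (Complex.norm_mul_exp_arg_mul_I z).symm

lemma measurableSet_box {a ℓ : ℝ} (hℓ : 0 < ℓ) (hℓ1 : ℓ ≤ 1) :
    MeasurableSet (box a ℓ) := by
  rw [boxEq hℓ hℓ1]
  apply MeasurableSet.inter
  · exact measurableSet_lt measurable_const continuous_norm.measurable
  apply MeasurableSet.inter
  · exact measurableSet_lt continuous_norm.measurable measurable_const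
  · exact measurableSet_lt ((measurable_fract.comp
      ((Complex.measurable_arg.div_const _).sub_const _))) measurable_const

lemma angular_measure (b m t : ℝ) (hm : 0 ≤ m) (hm1 : m ≤ 1) :
    volume {Θ ∈ Ico t (t + 2*π) | Int.fract (Θ/(2*π) - b) < m} = ENNReal.ofReal (2*π*m) := by
  have hpi : (0:ℝ) < 2*π := by positivity
  set c : ℝ := t/(2*π) - b with hc
  set n : ℤ := ⌊c⌋ with hn
  have hnc : (n:ℝ) ≤ c := Int.floor_le c
  have hcn : c < n + 1 := Int.lt_floor_add_one c
  have htc : t = 2*π*c + 2*π*b := by rw [hc]; field_simp; ring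
  have hSeq : {Θ ∈ Ico t (t + 2*π) | Int.fract (Θ/(2*π) - b) < m} =
      Ico t (2*π*((n:ℝ)+b+m)) ∪
      Ico (2*π*((n:ℝ)+1+b)) (min (t + 2*π) (2*π*((n:ℝ)+1+b+m))) := by
    ext Θ
    have hΘu : Θ = 2*π*(Θ/(2*π) - b) + 2*π*b := by field_simp; ring
    set u : ℝ := Θ/(2*π) - b with hudef
    simp only [mem_setOf_eq, mem_Ico, mem_union, mem_Ico, lt_min_iff]
    constructor
    · rintro ⟨⟨h1, h2⟩, hfr⟩
      have hu1 : c ≤ u := by nlinarith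
      have hu2 : u < c + 1 := by nlinarith
      have hf1 : n ≤ ⌊u⌋ := Int.le_floor.mpr (le_trans hnc hu1)
      have hf2 : ⌊u⌋ ≤ n + 1 := by
        have h := Int.floor_mono hu2.le
        rwa [Int.floor_add_one, ← hn] at h
      have hfu : Int.fract u = u - ⌊u⌋ := rfl
      have hcase : ⌊u⌋ = n ∨ ⌊u⌋ = n + 1 := by omega
      rcases hcase with h | h
      · left
        refine ⟨h1, ?_⟩
        rw [hfu, h] at hfr
        nlinarith
      · right
        have hfl : ((n:ℝ) + 1) ≤ u := by
          have := Int.floor_le u; rw [h] at this; push_cast at this; linarith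
        rw [hfu, h] at hfr
        push_cast at hfr
        exact ⟨by nlinarith, by nlinarith, by nlinarith⟩
    · rintro (⟨h1, h2⟩ | ⟨h1, ⟨h2, h3⟩⟩)
      · have hu1 : c ≤ u := by nlinarith
        have hu2 : u < n + m := by nlinarith
        have hfl : ⌊u⌋ = n := by
          rw [Int.floor_eq_iff]; constructor
          · exact le_trans hnc hu1
          · push_cast; nlinarith
        refine ⟨⟨h1, by nlinarith⟩, ?_⟩
        rw [show Int.fract u = u - ⌊u⌋ from rfl, hfl]
        nlinarith
      · have hu1 : (n:ℝ) + 1 ≤ u := by nlinarith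
        have hu2 : u < n + 1 + m := by nlinarith
        have hfl : ⌊u⌋ = n + 1 := by
          rw [Int.floor_eq_iff]; constructor
          · push_cast; linarith
          · push_cast; nlinarith
        refine ⟨⟨by nlinarith, by nlinarith⟩, ?_⟩
        rw [show Int.fract u = u - ⌊u⌋ from rfl, hfl]
        push_cast
        nlinarith
  rw [hSeq]
  have hdisj : Disjoint (Ico t (2*π*((n:ℝ)+b+m)))
      (Ico (2*π*((n:ℝ)+1+b)) (min (t + 2*π) (2*π*((n:ℝ)+1+b+m)))) := by
    apply Set.disjoint_left.mpr
    rintro Θ ⟨_, h2⟩ ⟨h3, _⟩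
    nlinarith
  rw [measure_union hdisj measurableSet_Ico, Real.volume_Ico, Real.volume_Ico]
  rcases le_or_gt (c - n) m with h | h
  · have hmin : min (t + 2*π) (2*π*((n:ℝ)+1+b+m)) = t + 2*π := by
      apply min_eq_left; nlinarith
    rw [hmin, ← ENNReal.ofReal_add (by nlinarith) (by nlinarith)]
    congr 1; nlinarith
  · have hmin : min (t + 2*π) (2*π*((n:ℝ)+1+b+m)) = 2*π*((n:ℝ)+1+b+m) := by
      apply min_eq_right; nlinarith
    rw [hmin, ENNReal.ofReal_of_nonpos (by nlinarith), zero_add]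
    congr 1; nlinarith

lemma volume_box_lt_top (a ℓ : ℝ) (hℓ : 0 < ℓ) (hℓ1 : ℓ ≤ 1) : volume (box a ℓ) < ⊤ := by
  apply lt_of_le_of_lt (measure_mono (subset_trans (box_subset_unitDisc a ℓ) ?_))
    (measure_ball_lt_top (x := (0:ℂ)) (r := 1))
  intro z hz
  simp only [Metric.mem_ball, Complex.dist_eq, sub_zero]
  simpa only [unitDisc, mem_setOf_eq] using hz

lemma volume_box {a ℓ : ℝ} (hℓ : 0 < ℓ) (hℓ1 : ℓ ≤ 1) :
    volume (box a ℓ) = ENNReal.ofReal (π * ℓ^2 * (2 - ℓ)) := by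
  have hpi : (0:ℝ) < 2*π := by positivity
  set A : Set ℝ := {Θ : ℝ | Int.fract (Θ/(2*π) - a) < ℓ} with hA
  have hAmeas : MeasurableSet A :=
    measurableSet_lt ((measurable_fract.comp
      ((measurable_id.div_const _).sub_const _))) measurable_const
  have key : ∫ z : ℂ, (box a ℓ).indicator (fun _ => (1:ℝ)) z
      = π * ℓ^2 * (2 - ℓ) := by
    rw [← Complex.integral_comp_polarCoord_symm]
    have heq : ∀ p ∈ polarCoord.target,
        p.1 • (box a ℓ).indicator (fun _ => (1:ℝ)) (Complex.polarCoord.symm p)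
        = ((Ioo (1-ℓ) 1).indicator id p.1) * (A.indicator (fun _ => (1:ℝ)) p.2) := by
      rintro ⟨r, Θ⟩ ⟨hr, hΘ⟩
      simp only [polarCoord_target, mem_Ioi, mem_prod] at hr hΘ ⊢
      have hr0 : (0:ℝ) < r := hr
      have habs : ‖Complex.polarCoord.symm (r, Θ)‖ = r := by
        rw [Complex.norm_polarCoord_symm]; exact abs_of_pos hr0
      have harg : Complex.arg (Complex.polarCoord.symm (r, Θ)) = Θ := by
        rw [Complex.polarCoord_symm_apply]
        push_cast
        exact Complex.arg_mul_cos_add_sin_mul_I hr0 ⟨hΘ.1, hΘ.2.le⟩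
      have hmem : Complex.polarCoord.symm (r, Θ) ∈ box a ℓ ↔ (r ∈ Ioo (1-ℓ) 1 ∧ Θ ∈ A) := by
        rw [boxEq hℓ hℓ1]
        simp only [mem_setOf_eq, habs, harg, mem_Ioo, hA]
        tauto
      by_cases hbox : Complex.polarCoord.symm (r, Θ) ∈ box a ℓ
      · obtain ⟨h1, h2⟩ := hmem.mp hbox
        rw [Set.indicator_of_mem hbox, Set.indicator_of_mem h1, Set.indicator_of_mem h2]
        simp
      · rw [Set.indicator_of_notMem hbox]
        rcases not_and_or.mp (fun h => hbox (hmem.mpr h)) with h | h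
        · rw [Set.indicator_of_notMem h]; simp
        · rw [Set.indicator_of_notMem h]; simp
    rw [setIntegral_congr_fun polarCoord.open_target.measurableSet heq]
    rw [polarCoord_target, Measure.volume_eq_prod]
    rw [setIntegral_prod_mul (fun r => (Ioo (1-ℓ) 1).indicator id r)
      (fun Θ => A.indicator (fun _ => (1:ℝ)) Θ) (Ioi 0) (Ioo (-π) π)]
    have hrad : ∫ r in Ioi (0:ℝ), (Ioo (1-ℓ) 1).indicator id r = (1 - (1-ℓ)^2)/2 := by
      rw [setIntegral_indicator measurableSet_Ioo]
      have : Ioi (0:ℝ) ∩ Ioo (1-ℓ) 1 = Ioo (1-ℓ) 1 := by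
        apply inter_eq_self_of_subset_right
        intro x hx
        have : (0:ℝ) ≤ 1 - ℓ := by linarith
        exact lt_of_le_of_lt this hx.1
      rw [this, ← integral_Ioc_eq_integral_Ioo,
        ← intervalIntegral.integral_of_le (by linarith : 1-ℓ ≤ 1)]
      simpa using intervalIntegral.integral_id (a := 1-ℓ) (b := 1)
    have hang : ∫ Θ in Ioo (-π) π, A.indicator (fun _ => (1:ℝ)) Θ = 2*π*ℓ := by
      rw [setIntegral_indicator hAmeas, setIntegral_const]
      have hIco : volume (Ico (-π) (-π + 2*π) ∩ A) = ENNReal.ofReal (2*π*ℓ) := by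
        have hset : Ico (-π) (-π + 2*π) ∩ A
            = {Θ ∈ Ico (-π) (-π + 2*π) | Int.fract (Θ/(2*π) - a) < ℓ} := by
          rfl
        rw [hset]; exact angular_measure a ℓ (-π) hℓ.le hℓ1
      have hIoo : volume (Ioo (-π) π ∩ A) = ENNReal.ofReal (2*π*ℓ) := by
        rw [← hIco]
        apply le_antisymm
        · apply measure_mono; apply inter_subset_inter_left
          intro x hx; exact ⟨hx.1.le, by linarith [hx.2]⟩
        · calc volume (Ico (-π) (-π+2*π) ∩ A)
              ≤ volume ((Ioo (-π) π ∩ A) ∪ {-π}) := by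
                apply measure_mono
                rintro x ⟨⟨h1, h2⟩, hxA⟩
                rcases eq_or_lt_of_le h1 with h | h
                · right; simp [← h]
                · left; exact ⟨⟨h, by linarith⟩, hxA⟩
            _ ≤ volume (Ioo (-π) π ∩ A) + volume ({-π} : Set ℝ) := measure_union_le _ _
            _ = volume (Ioo (-π) π ∩ A) := by rw [Real.volume_singleton, add_zero]
      rw [measureReal_def, hIoo, smul_eq_mul, mul_one, ENNReal.toReal_ofReal (by positivity)]
    rw [hrad, hang]
    ring
  have h2 : ∫ z : ℂ, (box a ℓ).indicator (fun _ => (1:ℝ)) z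
      = (volume (box a ℓ)).toReal := by
    rw [integral_indicator (measurableSet_box hℓ hℓ1), setIntegral_const, smul_eq_mul, mul_one, measureReal_def]
  have hfin := (volume_box_lt_top a ℓ hℓ hℓ1).ne
  rw [← ENNReal.ofReal_toReal hfin, ← h2, key]

variable {a ℓ : ℝ}

lemma dyadicBox_zero : dyadicBox a ℓ 0 0 = box a ℓ := by
  simp [dyadicBox]

lemma dyadicBox_subset_ancestor (hℓ : 0 < ℓ) {k k' j : ℕ} (hkk : k' ≤ k) (hj : j < 2^k) :
    dyadicBox a ℓ k j ⊆ dyadicBox a ℓ k' (j / 2^(k-k')) := by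
  have hdpos : 0 < 2^(k-k') := Nat.pow_pos (by norm_num)
  have hsplit : (2:ℝ)^k = 2^k' * 2^(k-k') := by
    rw [← pow_add]; congr 1; omega
  have hcast : ∀ x : ℕ, ((x:ℝ)) * ℓ / 2^k' = ((x * 2^(k-k') : ℕ):ℝ) * ℓ / 2^k := by
    intro x
    have hx : ((x * 2^(k-k') : ℕ):ℝ) = (x:ℝ) * 2^(k-k') := by push_cast; ring
    rw [hx, hsplit]
    field_simp
  apply box_subset_box
  · rw [hcast (j / 2^(k-k'))]
    have h1 : (j / 2^(k-k')) * 2^(k-k') ≤ j := Nat.div_mul_le_self j _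
    have h1' : (((j / 2^(k-k')) * 2^(k-k') : ℕ):ℝ) ≤ (j:ℝ) := by exact_mod_cast h1
    have h2 : (0:ℝ) < 2^k := by positivity
    gcongr
  · have harr : a + (((j / 2^(k-k')):ℕ):ℝ) * ℓ / 2^k' + ℓ/2^k'
        = a + (((j / 2^(k-k') + 1) * 2^(k-k') : ℕ):ℝ) * ℓ / 2^k := by
      rw [hcast (j / 2^(k-k'))]
      have hx : (((j / 2^(k-k') + 1) * 2^(k-k') : ℕ):ℝ)
          = (((j / 2^(k-k')) * 2^(k-k') : ℕ):ℝ) + 2^(k-k') := by push_cast; ring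
      rw [hx, hsplit]
      push_cast
      field_simp
      ring
    rw [harr]
    have h1 : j + 1 ≤ (j / 2^(k-k') + 1) * 2^(k-k') := by
      have h0 : 2^(k-k') * (j / 2^(k-k')) + j % 2^(k-k') = j := Nat.div_add_mod j _
      have hmod : j % 2^(k-k') < 2^(k-k') := Nat.mod_lt _ hdpos
      have hqd : (j / 2^(k-k') + 1) * 2^(k-k')
          = 2^(k-k') * (j / 2^(k-k')) + 2^(k-k') := by ring
      omega
    have h1' : ((j:ℝ) + 1) ≤ (((j / 2^(k-k') + 1) * 2^(k-k') : ℕ):ℝ) := by exact_mod_cast h1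
    have h2 : (0:ℝ) < 2^k := by positivity
    calc a + (j:ℝ) * ℓ / 2^k + ℓ/2^k = a + ((j:ℝ)+1) * ℓ / 2^k := by ring
      _ ≤ a + (((j / 2^(k-k') + 1) * 2^(k-k') : ℕ):ℝ) * ℓ / 2^k := by gcongr
  -- third: m ≤ m' is derived inside box_subset_box

lemma div_lt_pow_ancestor {k k' j : ℕ} (hkk : k' ≤ k) (hj : j < 2^k) :
    j / 2^(k-k') < 2^k' := by
  apply Nat.div_lt_of_lt_mul
  calc j < 2^k := hj
    _ = 2^(k-k') * 2^k' := by rw [← pow_add]; congr 1; omega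

lemma theta_unique {z : ℂ} (hz0 : z ≠ 0) {θ θ' : ℝ}
    (h1 : z = (‖z‖ : ℂ) * Complex.exp (2 * Real.pi * θ * Complex.I))
    (h2 : z = (‖z‖ : ℂ) * Complex.exp (2 * Real.pi * θ' * Complex.I))
    (hcl : |θ - θ'| < 1) : θ = θ' := by
  have hz0' : ((‖z‖ : ℝ) : ℂ) ≠ 0 := by
    simpa using hz0
  have hexp := mul_left_cancel₀ hz0' (h1.symm.trans h2)
  rw [Complex.exp_eq_exp_iff_exists_int] at hexp
  obtain ⟨n, hn⟩ := hexp
  have hn' : 2 * Real.pi * θ = 2 * Real.pi * θ' + n * (2 * Real.pi) := by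
    have h2' : (2 * Real.pi * θ : ℂ) * Complex.I =
        ((2 * Real.pi * θ' + n * (2 * Real.pi) : ℝ) : ℂ) * Complex.I := by
      push_cast; rw [hn]; ring
    exact_mod_cast mul_right_cancel₀ Complex.I_ne_zero h2'
  have hpi : (0:ℝ) < 2 * Real.pi := by positivity
  have h3 : (2 * Real.pi) * θ = (2 * Real.pi) * (θ' + n) := by rw [hn']; ring
  have hθn : θ = θ' + n := mul_left_cancel₀ (ne_of_gt hpi) h3
  have h4 : |(n:ℝ)| < 1 := by rw [hθn] at hcl; simpa using hcl
  have h5 : n = 0 := by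
    have h6 : |n| < 1 := by exact_mod_cast h4
    have := abs_lt.mp h6
    omega
  rw [hθn, h5]; simp


lemma dyadicBox_disjoint (hℓ : 0 < ℓ) (hℓ1 : ℓ ≤ 1) {k j j' : ℕ}
    (hj : j < 2^k) (hj' : j' < 2^k) (hne : j ≠ j') :
    Disjoint (dyadicBox a ℓ k j) (dyadicBox a ℓ k j') := by
  rw [Set.disjoint_left]
  intro z hz hz'
  rcases Nat.eq_zero_or_pos k with rfl | hk
  · simp only [pow_zero, Nat.lt_one_iff] at hj hj'
    exact hne (hj.trans hj'.symm)
  have h2k : (2:ℝ) ≤ 2^k := by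
    calc (2:ℝ) = 2^1 := (pow_one 2).symm
      _ ≤ 2^k := by apply pow_le_pow_right₀ (by norm_num) hk
  have h2kpos : (0:ℝ) < 2^k := by positivity
  have hm2 : ℓ/2^k ≤ 1/2 := by
    rw [div_le_div_iff₀ h2kpos (by norm_num)]
    nlinarith
  obtain ⟨ha1, ha2, θ, hθ, hrep⟩ := hz
  obtain ⟨hb1, hb2, θ', hθ', hrep'⟩ := hz'
  have hz0 : z ≠ 0 := by
    intro h
    rw [h] at ha1
    simp only [norm_zero] at ha1
    linarith
  have hjle : ((j:ℝ)+1) ≤ 2^k := by exact_mod_cast hj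
  have hjle' : ((j':ℝ)+1) ≤ 2^k := by exact_mod_cast hj'
  have hθa : a ≤ θ ∧ θ < a + ℓ := by
    constructor
    · have : 0 ≤ (j:ℝ) * ℓ / 2^k := by positivity
      linarith [hθ.1]
    · have h5 : ((j:ℝ)+1) * (ℓ / 2^k) ≤ 2^k * (ℓ/2^k) := by
        apply mul_le_mul_of_nonneg_right hjle (by positivity)
      have h6 : (2:ℝ)^k * (ℓ/2^k) = ℓ := by field_simp
      have hexp : ((j:ℝ)+1)*(ℓ/2^k) = (j:ℝ)*ℓ/2^k + ℓ/2^k := by ring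
      linarith [hθ.2]
  have hθb : a ≤ θ' ∧ θ' < a + ℓ := by
    constructor
    · have : 0 ≤ (j':ℝ) * ℓ / 2^k := by positivity
      linarith [hθ'.1]
    · have h5 : ((j':ℝ)+1) * (ℓ / 2^k) ≤ 2^k * (ℓ/2^k) := by
        apply mul_le_mul_of_nonneg_right hjle' (by positivity)
      have h6 : (2:ℝ)^k * (ℓ/2^k) = ℓ := by field_simp
      have hexp : ((j':ℝ)+1)*(ℓ/2^k) = (j':ℝ)*ℓ/2^k + ℓ/2^k := by ring
      linarith [hθ'.2]
  have habs : |θ - θ'| < 1 := by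
    rw [abs_lt]
    constructor <;> nlinarith [hθa.1, hθa.2, hθb.1, hθb.2]
  have hθeq : θ = θ' := theta_unique hz0 hrep hrep' habs
  have hcast : ∀ x y : ℕ, x < y → ((x:ℝ)+1) ≤ y := by
    intro x y h; exact_mod_cast h
  subst hθeq
  rcases Nat.lt_trichotomy j j' with h | h | h
  · have h1 := hcast j j' h
    have h2 : ((j:ℝ)+1) * (ℓ/2^k) ≤ (j':ℝ) * (ℓ/2^k) := by
      apply mul_le_mul_of_nonneg_right h1 (by positivity)
    have e1 : ((j:ℝ)+1)*(ℓ/2^k) = (j:ℝ)*ℓ/2^k + ℓ/2^k := by ring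
    have e2 : ((j':ℝ))*(ℓ/2^k) = (j':ℝ)*ℓ/2^k := by ring
    linarith [hθ.2, hθ'.1]
  · exact hne h
  · have h1 := hcast j' j h
    have h2 : ((j':ℝ)+1) * (ℓ/2^k) ≤ (j:ℝ) * (ℓ/2^k) := by
      apply mul_le_mul_of_nonneg_right h1 (by positivity)
    have e1 : ((j':ℝ)+1)*(ℓ/2^k) = (j':ℝ)*ℓ/2^k + ℓ/2^k := by ring
    have e2 : ((j:ℝ))*(ℓ/2^k) = (j:ℝ)*ℓ/2^k := by ring
    linarith [hθ.1, hθ'.2]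

lemma wInt_mono_set {w' : ℂ → ℝ} {S T : Set ℂ} (h : S ⊆ T) : wInt w' S ≤ wInt w' T :=
  lintegral_mono' (Measure.restrict_mono h le_rfl) le_rfl

lemma ennreal_absorb {x y : ℝ≥0∞} {β : ℝ} (hβ0 : 0 ≤ β) (hβ1 : β < 1) (hx : x ≠ ⊤)
    (h : x ≤ y + ENNReal.ofReal β * x) : x ≤ ENNReal.ofReal (1-β)⁻¹ * y := by
  set b := ENNReal.ofReal β with hb
  have hb1 : b < 1 := by rw [hb, ← ENNReal.ofReal_one]; exact ENNReal.ofReal_lt_ofReal_iff_of_nonneg hβ0 |>.mpr hβ1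
  have hsub : (1 - b) * x ≤ y := by
    have : (1 - b) * x = x - b * x := by
      rw [ENNReal.sub_mul (fun _ _ => hx), one_mul]
    rw [this]
    exact tsub_le_iff_right.mpr h
  have h1b0 : (1 - b) ≠ 0 := by
    have : 0 < 1 - b := tsub_pos_iff_lt.mpr hb1
    exact this.ne'
  have h1bt : (1 - b) ≠ ⊤ := by
    apply ne_top_of_le_ne_top (b := 1) ENNReal.one_ne_top tsub_le_self
  have hofr : ENNReal.ofReal (1-β)⁻¹ = (1 - b)⁻¹ := by
    rw [ENNReal.ofReal_inv_of_pos (by linarith), hb, ENNReal.ofReal_sub _ hβ0, ENNReal.ofReal_one]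
  rw [hofr]
  rw [← ENNReal.div_eq_inv_mul]
  rw [ENNReal.le_div_iff_mul_le (Or.inl h1b0) (Or.inl h1bt)]
  rw [mul_comm]
  exact hsub

lemma volume_box_ne_top (a ℓ : ℝ) (hℓ : 0 < ℓ) (hℓ1 : ℓ ≤ 1) : volume (box a ℓ) ≠ ⊤ :=
  (volume_box_lt_top a ℓ hℓ hℓ1).ne

lemma volume_box_pos (a ℓ : ℝ) (hℓ : 0 < ℓ) (hℓ1 : ℓ ≤ 1) : 0 < volume (box a ℓ) := by
  rw [volume_box hℓ hℓ1]
  rw [ENNReal.ofReal_pos]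
  have h2ℓ : (0:ℝ) < 2 - ℓ := by linarith
  positivity

lemma wInt_step {w' : ℂ → ℝ} (hw'm : Measurable w') {α β : ℝ}
    (hα0 : 0 < α) (hβ0 : 0 < β) (hβ1 : β < 1) (hB : BInfty w' α β) {b m b' m' : ℝ}
    (hm : 0 < m) (h1 : m' ≤ 1) (hmm' : m ≤ m') (hsub : box b m ⊆ box b' m')
    (hfin : wInt w' (box b' m') ≠ ⊤)
    (hv : (1-α) * (π * m'^2 * (2-m')) ≤ π * m^2 * (2-m)) :
    wInt w' (box b' m') ≤ ENNReal.ofReal (1-β)⁻¹ * wInt w' (box b m) := by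
  have hm' : 0 < m' := lt_of_lt_of_le hm hmm'
  have hm1 : m ≤ 1 := le_trans hmm' h1
  set E : Set ℂ := box b' m' \ box b m with hE
  have hEmeas : MeasurableSet E :=
    (measurableSet_box hm' h1).diff (measurableSet_box hm hm1)
  have volE : volume E ≤ ENNReal.ofReal α * volume (box b' m') := by
    rw [hE, measure_diff hsub (measurableSet_box hm hm1).nullMeasurableSet
      (volume_box_ne_top b m hm hm1)]
    rw [volume_box hm hm1, volume_box hm' h1]
    have h2m : (0:ℝ) < 2 - m := by linarith
    have hv0 : (0:ℝ) ≤ π * m^2 * (2-m) :=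
      (mul_pos (mul_pos Real.pi_pos (pow_pos hm 2)) h2m).le
    rw [← ENNReal.ofReal_sub _ hv0]
    rw [← ENNReal.ofReal_mul hα0.le]
    apply ENNReal.ofReal_le_ofReal
    nlinarith
  have hBa := hB b' m' hm' h1 E hEmeas Set.diff_subset volE
  have hunion : box b' m' = box b m ∪ E := by
    rw [hE, Set.union_diff_cancel hsub]
  have hsplit : wInt w' (box b' m') = wInt w' (box b m) + wInt w' E := by
    simp only [wInt]
    rw [hunion, lintegral_union hEmeas Set.disjoint_sdiff_right]
  apply ennreal_absorb hβ0.le hβ1 hfin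
  calc wInt w' (box b' m') = wInt w' (box b m) + wInt w' E := hsplit
    _ ≤ wInt w' (box b m) + ENNReal.ofReal β * wInt w' (box b' m') := add_le_add_right hBa _



lemma wInt_double {w' : ℂ → ℝ} (hw'm : Measurable w') {α β : ℝ}
    (hα0 : 0 < α) (hα1 : α < 1) (hβ0 : 0 < β) (hβ1 : β < 1) (hB : BInfty w' α β)
    (hfin : ∀ S : Set ℂ, S ⊆ unitDisc → wInt w' S ≠ ⊤) :
    ∃ N : ℕ, ∀ B m r : ℝ, 0 < m → 2*m ≤ 1 → 0 ≤ r → r ≤ 1 →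
      wInt w' (box B (2*m)) ≤ ENNReal.ofReal ((1-β)⁻¹^N) * wInt w' (box (B + r*m) m) := by
  set γ : ℝ := Real.sqrt (1-α) with hγ
  have h1α : (0:ℝ) < 1 - α := by linarith
  have hγ0 : 0 < γ := Real.sqrt_pos.mpr h1α
  have hγ1 : γ < 1 := by
    have h := Real.sqrt_lt_sqrt h1α.le (by linarith : 1 - α < 1)
    rwa [Real.sqrt_one] at h
  have hγsq : γ^2 = 1 - α := Real.sq_sqrt h1α.le
  obtain ⟨N, hN⟩ : ∃ N : ℕ, γ^N < 1/2 := exists_pow_lt_of_lt_one (by norm_num) hγ1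
  refine ⟨N, fun B m r hm h2m hr0 hr1 => ?_⟩
  set c : ℕ → ℝ := fun i => max m (2*m*γ^(N-i)) with hc
  have hcm : ∀ i, m ≤ c i := fun i => le_max_left _ _
  have hcpos : ∀ i, 0 < c i := fun i => lt_of_lt_of_le hm (hcm i)
  have hc2m : ∀ i, c i ≤ 2*m := by
    intro i
    apply max_le (by linarith)
    have : γ^(N-i) ≤ 1 := pow_le_one₀ hγ0.le hγ1.le
    nlinarith
  have hcmono : ∀ i, c i ≤ c (i+1) := by
    intro i
    apply max_le_max le_rfl
    have : γ^(N-i) ≤ γ^(N-(i+1)) := pow_le_pow_of_le_one hγ0.le hγ1.le (by omega)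
    nlinarith
  have hc0 : c 0 = m := by
    rw [hc]
    apply max_eq_left
    simp only [Nat.sub_zero]
    nlinarith [hN]
  have hcN : c N = 2*m := by
    rw [hc]
    simp only [Nat.sub_self, pow_zero, mul_one]
    apply max_eq_right
    linarith
  have hγc : ∀ i, i < N → γ * c (i+1) ≤ c i := by
    intro i hiN
    rcases max_cases m (2*m*γ^(N-(i+1))) with ⟨h1, h2⟩ | ⟨h1, h2⟩
    · have : c (i+1) = m := h1
      rw [this]
      calc γ * m ≤ m := by nlinarith
        _ ≤ c i := hcm i
    · have hce : c (i+1) = 2*m*γ^(N-(i+1)) := h1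
      rw [hce]
      have hne : N - i = (N - (i+1)) + 1 := by omega
      have : γ * (2*m*γ^(N-(i+1))) = 2*m*γ^(N-i) := by
        rw [hne, pow_succ]; ring
      rw [this]
      exact le_max_right _ _
  -- the chain of boxes
  have key : ∀ i : ℕ, i ≤ N →
      wInt w' (box (B + r*(2*m - c i)) (c i)) ≤
        ENNReal.ofReal ((1-β)⁻¹^i) * wInt w' (box (B + r*m) m) := by
    intro i
    induction i with
    | zero =>
      intro _
      rw [show B + r*(2*m - c 0) = B + r*m by rw [hc0]; ring, hc0]
      simp only [pow_zero, ENNReal.ofReal_one, one_mul, le_refl]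
    | succ i ih =>
      intro hiN
      have hiN' : i < N := hiN
      have hstep : wInt w' (box (B + r*(2*m - c (i+1))) (c (i+1))) ≤
          ENNReal.ofReal (1-β)⁻¹ * wInt w' (box (B + r*(2*m - c i)) (c i)) := by
        apply wInt_step hw'm hα0 hβ0 hβ1 hB (hcpos i) (le_trans (hc2m (i+1)) h2m)
          (hcmono i)
        · apply box_subset_box
          · have := hcmono i
            nlinarith
          · have := hcmono i
            nlinarith
        · exact hfin _ (box_subset_unitDisc _ _)
        · have hgc := hγc i hiN'
          have h2c : (0:ℝ) < 2 - c (i+1) := by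
            have := hc2m (i+1); linarith
          have e1 : (1-α) * (π * (c (i+1))^2 * (2 - c (i+1)))
              = π * (γ * c (i+1))^2 * (2 - c (i+1)) := by
            rw [← hγsq]; ring
          rw [e1]
          have hb1 : π * (γ * c (i+1))^2 * (2 - c (i+1)) ≤ π * (c i)^2 * (2 - c (i+1)) := by
            apply mul_le_mul_of_nonneg_right _ h2c.le
            apply mul_le_mul_of_nonneg_left _ Real.pi_pos.le
            apply pow_le_pow_left₀ (mul_nonneg hγ0.le (hcpos (i+1)).le) hgc
          have hb2 : π * (c i)^2 * (2 - c (i+1)) ≤ π * (c i)^2 * (2 - c i) := by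
            apply mul_le_mul_of_nonneg_left _ (by positivity)
            linarith [hcmono i]
          linarith
      calc wInt w' (box (B + r*(2*m - c (i+1))) (c (i+1)))
          ≤ ENNReal.ofReal (1-β)⁻¹ * wInt w' (box (B + r*(2*m - c i)) (c i)) := hstep
        _ ≤ ENNReal.ofReal (1-β)⁻¹ *
            (ENNReal.ofReal ((1-β)⁻¹^i) * wInt w' (box (B + r*m) m)) := by
            exact mul_le_mul_right (ih (by omega)) _
        _ = ENNReal.ofReal ((1-β)⁻¹^(i+1)) * wInt w' (box (B + r*m) m) := by
            rw [← mul_assoc, ← ENNReal.ofReal_mul (inv_nonneg.mpr (by linarith : (0:ℝ) ≤ 1-β)),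
              pow_succ]
            ring_nf
  have := key N le_rfl
  rw [hcN] at this
  rw [show B + r*(2*m - 2*m) = B by ring] at this
  exact this

lemma good_bound {w' : ℂ → ℝ} (hw'm : Measurable w') {α β : ℝ}
    (hα0 : 0 < α) (hβ0 : 0 < β) (hβ1 : β < 1) (hB : BInfty w' α β) {b m lam : ℝ}
    (hm : 0 < m) (hm1 : m ≤ 1) (hlam : 0 < lam)
    (hfin : wInt w' (box b m) ≠ ⊤)
    (havg : wInt w' (box b m) ≤ (ENNReal.ofReal lam)⁻¹ * volume (box b m)) :
    ENNReal.ofReal (1-β) * wInt w' (box b m) ≤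
      wInt w' {x ∈ box b m | lam * α * w' x < 1} := by
  set R : Set ℂ := box b m with hR
  set G : Set ℂ := {x ∈ R | lam * α * w' x < 1} with hG
  set F : Set ℂ := {x ∈ R | 1 ≤ lam * α * w' x} with hF
  have hRmeas : MeasurableSet R := measurableSet_box hm hm1
  have hcond : MeasurableSet {x : ℂ | 1 ≤ lam * α * w' x} :=
    measurableSet_le measurable_const (((hw'm.const_mul _)))
  have hFmeas : MeasurableSet F := hRmeas.inter hcond
  have hunion : R = G ∪ F := by
    ext x
    simp only [hG, hF, mem_union, mem_setOf_eq, mem_sep_iff]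
    constructor
    · intro hx
      rcases lt_or_ge (lam * α * w' x) 1 with h | h
      · exact Or.inl ⟨hx, h⟩
      · exact Or.inr ⟨hx, h⟩
    · rintro (⟨hx, _⟩ | ⟨hx, _⟩) <;> exact hx
  have hdisj : Disjoint G F := by
    rw [Set.disjoint_left]
    rintro x ⟨_, hx1⟩ ⟨_, hx2⟩
    linarith
  have hsplit : wInt w' R = wInt w' G + wInt w' F := by
    simp only [wInt]
    rw [hunion, lintegral_union hFmeas hdisj]
  have hlamα : 0 < lam * α := mul_pos hlam hα0
  have hcheb : ENNReal.ofReal (1/(lam*α)) * volume F ≤ wInt w' F := by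
    rw [← setLIntegral_const F (ENNReal.ofReal (1/(lam*α)))]
    apply setLIntegral_mono (hw'm.ennreal_ofReal)
    intro x hx
    apply ENNReal.ofReal_le_ofReal
    rw [div_le_iff₀ hlamα]
    have := hx.2
    nlinarith
  have hvolF : volume F ≤ ENNReal.ofReal α * volume R := by
    have hkey : ENNReal.ofReal (lam*α) * ENNReal.ofReal (1/(lam*α)) = 1 := by
      rw [← ENNReal.ofReal_mul hlamα.le, mul_one_div_cancel hlamα.ne', ENNReal.ofReal_one]
    calc volume F = ENNReal.ofReal (lam*α) * (ENNReal.ofReal (1/(lam*α)) * volume F) := by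
          rw [← mul_assoc, hkey, one_mul]
      _ ≤ ENNReal.ofReal (lam*α) * wInt w' F := mul_le_mul_right hcheb _
      _ ≤ ENNReal.ofReal (lam*α) * wInt w' R :=
          mul_le_mul_right (wInt_mono_set (hunion ▸ Set.subset_union_right)) _
      _ ≤ ENNReal.ofReal (lam*α) * ((ENNReal.ofReal lam)⁻¹ * volume R) :=
          mul_le_mul_right havg _
      _ = ENNReal.ofReal α * (ENNReal.ofReal lam * (ENNReal.ofReal lam)⁻¹) * volume R := by
          rw [ENNReal.ofReal_mul hlam.le]; ring
      _ = ENNReal.ofReal α * volume R := by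
          rw [ENNReal.mul_inv_cancel (by simp [hlam]) ENNReal.ofReal_ne_top, mul_one]
  have hBF : wInt w' F ≤ ENNReal.ofReal β * wInt w' R :=
    hB b m hm hm1 F hFmeas (Set.sep_subset _ _) hvolF
  have hFfin : wInt w' F ≠ ⊤ :=
    (lt_of_le_of_lt (wInt_mono_set (hunion ▸ Set.subset_union_right))
      (lt_of_le_of_ne le_top hfin)).ne
  rw [← ENNReal.add_le_add_iff_right hFfin]
  calc ENNReal.ofReal (1-β) * wInt w' R + wInt w' F
      ≤ ENNReal.ofReal (1-β) * wInt w' R + ENNReal.ofReal β * wInt w' R :=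
        add_le_add_right hBF _
    _ = (ENNReal.ofReal (1-β) + ENNReal.ofReal β) * wInt w' R := by rw [add_mul]
    _ = wInt w' R := by
        rw [← ENNReal.ofReal_add (by linarith) (by linarith)]
        norm_num
    _ = wInt w' G + wInt w' F := hsplit


end AuxLemmas

/-- Level set estimate for `B_∞` weights: there is `C = C(w)` with
`|Q ∩ {1/m_Q w > λ}| ≤ (Cλ/(1-β))·w(Q ∩ {1/w > λα})` for all Carleson boxes `Q`
and all `λ > 1/w_Q`. -/
theorem stmt19 (w : ℂ → ℝ) (hw : IsWeight w) (α β : ℝ)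
    (hα : 0 < α) (hα1 : α < 1) (hβ : 0 < β) (hβ1 : β < 1)
    (hB : BInfty w α β) :
    ∃ C : ℝ, 0 < C ∧ ∀ a ℓ : ℝ, 0 < ℓ → ℓ ≤ 1 → ∀ lam : ℝ,
      1 / avgR w (box a ℓ) < lam →
      volume {x ∈ box a ℓ | ENNReal.ofReal lam < (dyadicMinE a ℓ w x)⁻¹} ≤
        ENNReal.ofReal (C * lam / (1 - β)) *
          wInt w {x ∈ box a ℓ | lam * α * w x < 1} := by
  classical
  have hDmeas : MeasurableSet unitDisc :=
    measurableSet_lt continuous_norm.measurable measurable_const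
  obtain ⟨hInt, hwpos⟩ := hw
  set w' : ℂ → ℝ := (hInt.aestronglyMeasurable.mk w) with hw'def
  have hw'm : Measurable w' := hInt.aestronglyMeasurable.stronglyMeasurable_mk.measurable
  have hae : w =ᵐ[volume.restrict unitDisc] w' := hInt.aestronglyMeasurable.ae_eq_mk
  -- congruence of wInt on subsets of the disc
  have haeS : ∀ S : Set ℂ, S ⊆ unitDisc → w =ᵐ[volume.restrict S] w' := by
    intro S hS
    exact ae_mono (Measure.restrict_mono hS le_rfl) hae
  have hwInt_congr : ∀ S : Set ℂ, S ⊆ unitDisc → wInt w S = wInt w' S := by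
    intro S hS
    exact lintegral_congr_ae ((haeS S hS).mono fun x hx => by dsimp only; rw [hx])
  have havgE_congr : ∀ b m : ℝ, avgE w (box b m) = avgE w' (box b m) := by
    intro b m
    unfold avgE
    rw [hwInt_congr _ (box_subset_unitDisc b m)]
  have hB' : BInfty w' α β := by
    intro b m hm hm1 E hE hEsub hvol
    rw [← hwInt_congr E (hEsub.trans (box_subset_unitDisc b m)),
      ← hwInt_congr _ (box_subset_unitDisc b m)]
    exact hB b m hm hm1 E hE hEsub hvol
  have hdiscfin : wInt w unitDisc ≠ ⊤ := hInt.lintegral_lt_top.ne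
  have hfin' : ∀ S : Set ℂ, S ⊆ unitDisc → wInt w' S ≠ ⊤ := by
    intro S hS
    have h1 : wInt w' S ≤ wInt w' unitDisc := wInt_mono_set hS
    have h2 : wInt w' unitDisc = wInt w unitDisc := (hwInt_congr _ subset_rfl).symm
    exact (lt_of_le_of_lt h1 (h2 ▸ lt_top_iff_ne_top.mpr hdiscfin)).ne
  obtain ⟨N, hdouble⟩ := wInt_double hw'm hα hα1 hβ hβ1 hB' hfin'
  refine ⟨(1-β)⁻¹^N, pow_pos (inv_pos.mpr (by linarith)) N, ?_⟩
  intro a ℓ hℓ hℓ1 lam hlam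
  set C : ℝ := (1-β)⁻¹^N with hC
  have hC1 : (1:ℝ) ≤ C := one_le_pow₀ (by rw [le_inv_comm₀ one_pos (by linarith)]; linarith)
  -- basic facts about Q = box a ℓ
  set Q : Set ℂ := box a ℓ with hQ
  have hQm : MeasurableSet Q := measurableSet_box hℓ hℓ1
  have hQsub : Q ⊆ unitDisc := box_subset_unitDisc a ℓ
  have hvolQ0 : volume Q ≠ 0 := (volume_box_pos a ℓ hℓ hℓ1).ne'
  have hvolQt : volume Q ≠ ⊤ := volume_box_ne_top a ℓ hℓ hℓ1
  have hIntQ : IntegrableOn w Q := hInt.mono_set hQsub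
  have hIntQ' : IntegrableOn w' Q := hIntQ.congr (haeS Q hQsub)
  have hposQ : ∀ᵐ x ∂(volume.restrict Q), 0 < w' x := by
    have h1 : ∀ᵐ x ∂(volume.restrict Q), 0 < w x :=
      ae_mono (Measure.restrict_mono hQsub le_rfl) hwpos
    filter_upwards [h1, haeS Q hQsub] with x h2 h3
    rw [← h3]; exact h2
  have hnnQ : 0 ≤ᵐ[volume.restrict Q] w' := hposQ.mono fun x hx => hx.le
  -- avgR and lam positivity
  have havgR_congr : avgR w Q = avgR w' Q := by
    unfold avgR
    rw [integral_congr_ae (haeS Q hQsub)]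
  have hintpos : 0 < ∫ x in Q, w' x := by
    rw [setIntegral_pos_iff_support_of_nonneg_ae hnnQ hIntQ']
    have hsup : volume (Q \ Function.support w') = 0 := by
      have h1 : ∀ᵐ x ∂(volume.restrict Q), x ∈ Function.support w' :=
        hposQ.mono fun x hx => by simp [Function.support, hx.ne']
      have h2 := (ae_restrict_iff' hQm).mp h1
      rw [ae_iff] at h2
      apply measure_mono_null _ h2
      intro x hx
      simp only [mem_setOf_eq]
      intro hcon
      exact hx.2 (hcon hx.1)
    have h3 : volume Q ≤ volume (Function.support w' ∩ Q) := by
      calc volume Q ≤ volume ((Function.support w' ∩ Q) ∪ (Q \ Function.support w')) := by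
            apply measure_mono
            intro x hx
            by_cases h : x ∈ Function.support w'
            · exact Or.inl ⟨h, hx⟩
            · exact Or.inr ⟨hx, h⟩
        _ ≤ volume (Function.support w' ∩ Q) + volume (Q \ Function.support w') :=
            measure_union_le _ _
        _ = volume (Function.support w' ∩ Q) := by rw [hsup, add_zero]
    exact lt_of_lt_of_le (pos_iff_ne_zero.mpr hvolQ0) h3
  have hvolQtR : 0 < (volume Q).toReal := ENNReal.toReal_pos hvolQ0 hvolQt
  have havgRpos : 0 < avgR w' Q := div_pos hintpos hvolQtR
  have hlam0 : 0 < lam := by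
    rw [havgR_congr] at hlam
    have : 0 < 1 / avgR w' Q := by positivity
    linarith
  set T : ℝ≥0∞ := (ENNReal.ofReal lam)⁻¹ with hT
  have hoflam0 : ENNReal.ofReal lam ≠ 0 := by
    simp [ENNReal.ofReal_eq_zero, not_le, hlam0]
  have hT0 : T ≠ 0 := by
    rw [hT]
    exact ENNReal.inv_ne_zero.mpr ENNReal.ofReal_ne_top
  have hTt : T ≠ ⊤ := by
    rw [hT]
    exact ENNReal.inv_ne_top.mpr hoflam0
  have hTinv : T⁻¹ = ENNReal.ofReal lam := by rw [hT, inv_inv]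
  -- the root box is not small
  have havgEQ : avgE w' Q = ENNReal.ofReal (avgR w' Q) := by
    unfold avgE avgR
    rw [wInt, ← ofReal_integral_eq_lintegral_ofReal hIntQ' hnnQ]
    rw [ENNReal.ofReal_div_of_pos hvolQtR, ENNReal.ofReal_toReal hvolQt]
  have hroot : T ≤ avgE w' Q := by
    rw [havgEQ, hT, ← ENNReal.ofReal_inv_of_pos hlam0]
    apply ENNReal.ofReal_le_ofReal
    rw [havgR_congr, one_div] at hlam
    rw [inv_le_comm₀ hlam0 havgRpos]
    exact hlam.le
  -- dyadic boxes basic facts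
  have hmk : ∀ k : ℕ, 0 < ℓ/2^k := fun k => by positivity
  have hmk1 : ∀ k : ℕ, ℓ/2^k ≤ 1 := by
    intro k
    have h1 : (1:ℝ) ≤ 2^k := one_le_pow₀ (by norm_num)
    rw [div_le_one (by positivity : (0:ℝ) < 2^k)]
    linarith

  have hdb_eq : ∀ k j : ℕ, dyadicBox a ℓ k j = box (a + j*ℓ/2^k) (ℓ/2^k) := fun _ _ => rfl
  have hdbm : ∀ k j : ℕ, MeasurableSet (dyadicBox a ℓ k j) := by
    intro k j
    rw [hdb_eq]
    exact measurableSet_box (hmk k) (hmk1 k)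
  have hdbdisc : ∀ k j : ℕ, dyadicBox a ℓ k j ⊆ unitDisc := by
    intro k j
    rw [hdb_eq]
    exact box_subset_unitDisc _ _
  have hdbQ : ∀ k j : ℕ, j < 2^k → dyadicBox a ℓ k j ⊆ Q := by
    intro k j hj
    have h1 := dyadicBox_subset_ancestor (a := a) hℓ (Nat.zero_le k) hj
    rw [Nat.sub_zero, Nat.div_eq_of_lt hj, dyadicBox_zero] at h1
    exact h1
  have hdbvol0 : ∀ k j : ℕ, volume (dyadicBox a ℓ k j) ≠ 0 := by
    intro k j
    rw [hdb_eq]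
    exact (volume_box_pos _ _ (hmk k) (hmk1 k)).ne'
  have hdbvolt : ∀ k j : ℕ, volume (dyadicBox a ℓ k j) ≠ ⊤ := by
    intro k j
    rw [hdb_eq]
    exact volume_box_ne_top _ _ (hmk k) (hmk1 k)
  have hdMin : ∀ x : ℂ, dyadicMinE a ℓ w x = dyadicMinE a ℓ w' x := by
    intro x
    unfold dyadicMinE
    refine iInf_congr fun k => iInf_congr fun j => iInf_congr fun _ => iInf_congr fun _ => ?_
    rw [hdb_eq]
    exact havgE_congr _ _
  -- the selection of maximal small boxes
  set Sel : Set (ℕ × ℕ) := {p | p.2 < 2^p.1 ∧ avgE w' (dyadicBox a ℓ p.1 p.2) < T ∧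
    ∀ k' < p.1, ¬ (avgE w' (dyadicBox a ℓ k' (p.2 / 2^(p.1 - k'))) < T)} with hSel
  -- covering
  have hcover : {x ∈ Q | ENNReal.ofReal lam < (dyadicMinE a ℓ w x)⁻¹} ⊆
      ⋃ p ∈ Sel, dyadicBox a ℓ p.1 p.2 := by
    rintro x ⟨hxQ, hxlt⟩
    rw [hdMin x] at hxlt
    have hx3 : dyadicMinE a ℓ w' x < T := ENNReal.lt_inv_iff_lt_inv.mp hxlt
    simp only [dyadicMinE, iInf_lt_iff] at hx3
    obtain ⟨k, j, hj, hxj, havg⟩ := hx3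
    have hex : ∃ n : ℕ, ∃ i, i < 2^n ∧ x ∈ dyadicBox a ℓ n i ∧
        avgE w' (dyadicBox a ℓ n i) < T := ⟨k, j, hj, hxj, havg⟩
    obtain ⟨J, hJ1, hJ2, hJ3⟩ := Nat.find_spec hex
    have hSelmem : ((Nat.find hex, J) : ℕ × ℕ) ∈ Sel := by
      refine ⟨hJ1, hJ3, ?_⟩
      intro k' hk' hcon
      exact Nat.find_min hex hk' ⟨J / 2^(Nat.find hex - k'),
        div_lt_pow_ancestor hk'.le hJ1,
        dyadicBox_subset_ancestor hℓ hk'.le hJ1 hJ2, hcon⟩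
    exact mem_biUnion hSelmem hJ2
  -- pairwise disjointness of the selected boxes
  have hkey2 : ∀ p ∈ Sel, ∀ q ∈ Sel, p.1 ≤ q.1 → p ≠ q →
      Disjoint (dyadicBox a ℓ p.1 p.2) (dyadicBox a ℓ q.1 q.2) := by
    rintro ⟨k, j⟩ hp ⟨k', j'⟩ hq hkk hne
    rcases eq_or_lt_of_le hkk with heq | hlt
    · subst heq
      have hjj : j ≠ j' := by
        intro h
        exact hne (by rw [h])
      exact dyadicBox_disjoint hℓ hℓ1 hp.1 hq.1 hjj
    · by_contra hnd
      obtain ⟨z, hz1, hz2⟩ := Set.not_disjoint_iff.mp hnd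
      have hzanc : z ∈ dyadicBox a ℓ k (j' / 2^(k'-k)) :=
        dyadicBox_subset_ancestor hℓ hlt.le hq.1 hz2
      rcases eq_or_ne (j' / 2^(k'-k)) j with hqe | hqe
      · have := hq.2.2 k hlt
        rw [hqe] at this
        exact this hp.2.1
      · exact Set.disjoint_left.mp
          (dyadicBox_disjoint hℓ hℓ1 (div_lt_pow_ancestor hlt.le hq.1) hp.1 hqe)
          hzanc hz1
  have hSeldisj : Sel.PairwiseDisjoint (fun p : ℕ × ℕ => dyadicBox a ℓ p.1 p.2) := by
    intro p hp q hq hne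
    rcases le_total p.1 q.1 with h | h
    · exact hkey2 p hp q hq h hne
    · exact (hkey2 q hq p hp h (Ne.symm hne)).symm
  -- the good sets
  set good : ℕ × ℕ → Set ℂ :=
    fun p => {x ∈ dyadicBox a ℓ p.1 p.2 | lam * α * w' x < 1} with hgood
  have hgoodm : ∀ p : ℕ × ℕ, MeasurableSet (good p) := by
    intro p
    exact (hdbm p.1 p.2).inter (measurableSet_lt (hw'm.const_mul _) measurable_const)
  have hgooddisj : Sel.PairwiseDisjoint good := by
    intro p hp q hq hne
    exact (hSeldisj hp hq hne).mono (Set.sep_subset _ _) (Set.sep_subset _ _)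
  -- coefficient
  set coef : ℝ≥0∞ := ENNReal.ofReal lam * (ENNReal.ofReal C * (ENNReal.ofReal (1-β))⁻¹)
    with hcoef
  have h1β0 : ENNReal.ofReal (1-β) ≠ 0 := (ENNReal.ofReal_pos.mpr (by linarith)).ne'
  -- the per-box estimate
  have hperbox : ∀ p ∈ Sel, volume (dyadicBox a ℓ p.1 p.2) ≤ coef * wInt w' (good p) := by
    rintro ⟨k, j⟩ hp
    obtain ⟨hj, havgp, hanc⟩ := hp
    replace hj : j < 2^k := hj
    replace havgp : avgE w' (dyadicBox a ℓ k j) < T := havgp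
    replace hanc : ∀ k' < k, ¬ (avgE w' (dyadicBox a ℓ k' (j / 2^(k - k'))) < T) := hanc
    have hk1 : 1 ≤ k := by
      by_contra hcon
      have hk0 : k = 0 := by omega
      subst hk0
      have hj0 : j = 0 := by omega
      subst hj0
      rw [dyadicBox_zero] at havgp
      exact absurd havgp (not_lt.mpr hroot)
    -- the parent box
    have hexp1 : k - (k-1) = 1 := by omega
    have hPanc := hanc (k-1) (by omega)
    rw [hexp1, pow_one] at hPanc
    have hPavg : T ≤ avgE w' (dyadicBox a ℓ (k-1) (j/2)) := not_lt.mp hPanc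
    have hsubP : dyadicBox a ℓ k j ⊆ dyadicBox a ℓ (k-1) (j/2) := by
      have h1 := dyadicBox_subset_ancestor (a := a) hℓ (by omega : k-1 ≤ k) hj
      rw [hexp1, pow_one] at h1
      exact h1
    -- |R| ≤ |P| ≤ lam * w(P)
    have hwP : T * volume (dyadicBox a ℓ (k-1) (j/2)) ≤ wInt w' (dyadicBox a ℓ (k-1) (j/2)) := by
      have := (ENNReal.le_div_iff_mul_le (Or.inl (hdbvol0 (k-1) (j/2)))
        (Or.inl (hdbvolt (k-1) (j/2)))).mp hPavg
      exact this
    have hvolP : volume (dyadicBox a ℓ (k-1) (j/2)) ≤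
        ENNReal.ofReal lam * wInt w' (dyadicBox a ℓ (k-1) (j/2)) := by
      calc volume (dyadicBox a ℓ (k-1) (j/2))
          = T⁻¹ * (T * volume (dyadicBox a ℓ (k-1) (j/2))) := by
            rw [← mul_assoc, ENNReal.inv_mul_cancel hT0 hTt, one_mul]
        _ ≤ T⁻¹ * wInt w' (dyadicBox a ℓ (k-1) (j/2)) := mul_le_mul_right hwP _
        _ = ENNReal.ofReal lam * wInt w' (dyadicBox a ℓ (k-1) (j/2)) := by rw [hTinv]
    -- doubling: w(P) ≤ C * w(R)
    have h2k : (2:ℝ)^k = 2*2^(k-1) := by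
      rw [← pow_succ']
      congr 1
      omega
    have heq2 : ℓ/2^(k-1) = 2*(ℓ/2^k) := by
      rw [h2k]
      have : (2:ℝ)^(k-1) ≠ 0 := by positivity
      field_simp
    have hj2 : ((j:ℕ):ℝ) = 2*((j/2 :ℕ):ℝ) + ((j%2:ℕ):ℝ) := by
      exact_mod_cast (Nat.div_add_mod j 2).symm
    have e3 : a + (j:ℝ)*ℓ/2^k = (a + ((j/2 : ℕ):ℝ)*ℓ/2^(k-1)) + ((j % 2 : ℕ):ℝ)*(ℓ/2^k) := by
      rw [hj2, h2k]
      have : (2:ℝ)^(k-1) ≠ 0 := by positivity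
      field_simp
      ring
    have hr1 : ((j % 2 : ℕ):ℝ) ≤ 1 := by
      have : j % 2 < 2 := Nat.mod_lt _ (by norm_num)
      exact_mod_cast Nat.lt_succ_iff.mp this
    have hdC := hdouble (a + ((j/2 : ℕ):ℝ)*ℓ/2^(k-1)) (ℓ/2^k) ((j % 2 : ℕ):ℝ)
      (hmk k) (by rw [← heq2]; exact hmk1 (k-1)) (Nat.cast_nonneg _) hr1
    rw [← heq2, ← e3] at hdC
    have hdC' : wInt w' (dyadicBox a ℓ (k-1) (j/2)) ≤
        ENNReal.ofReal C * wInt w' (dyadicBox a ℓ k j) := by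
      rw [hdb_eq (k-1) (j/2), hdb_eq k j]
      exact hdC
    -- good set bound on R
    have havgR' : wInt w' (dyadicBox a ℓ k j) ≤ T * volume (dyadicBox a ℓ k j) := by
      have := (ENNReal.div_lt_iff (Or.inl (hdbvol0 k j)) (Or.inl (hdbvolt k j))).mp havgp
      exact this.le
    have hgb : ENNReal.ofReal (1-β) * wInt w' (dyadicBox a ℓ k j) ≤ wInt w' (good (k, j)) := by
      rw [hdb_eq k j] at havgR' ⊢
      have := good_bound hw'm hα hβ hβ1 hB' (hmk k) (hmk1 k) hlam0
        (hfin' _ (box_subset_unitDisc _ _)) havgR'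
      exact this
    have hgb' : wInt w' (dyadicBox a ℓ k j) ≤
        (ENNReal.ofReal (1-β))⁻¹ * wInt w' (good (k, j)) := by
      calc wInt w' (dyadicBox a ℓ k j)
          = (ENNReal.ofReal (1-β))⁻¹ * (ENNReal.ofReal (1-β) * wInt w' (dyadicBox a ℓ k j)) := by
            rw [← mul_assoc, ENNReal.inv_mul_cancel h1β0 ENNReal.ofReal_ne_top, one_mul]
        _ ≤ (ENNReal.ofReal (1-β))⁻¹ * wInt w' (good (k, j)) := mul_le_mul_right hgb _
    -- chain
    calc volume (dyadicBox a ℓ k j) ≤ volume (dyadicBox a ℓ (k-1) (j/2)) :=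
          measure_mono hsubP
      _ ≤ ENNReal.ofReal lam * wInt w' (dyadicBox a ℓ (k-1) (j/2)) := hvolP
      _ ≤ ENNReal.ofReal lam * (ENNReal.ofReal C * wInt w' (dyadicBox a ℓ k j)) :=
          mul_le_mul_right hdC' _
      _ ≤ ENNReal.ofReal lam * (ENNReal.ofReal C *
            ((ENNReal.ofReal (1-β))⁻¹ * wInt w' (good (k, j)))) := by
          exact mul_le_mul_right (mul_le_mul_right hgb' _) _
      _ = coef * wInt w' (good (k, j)) := by
          rw [hcoef]
          ring
  -- summation
  set μ' : Measure ℂ := volume.withDensity (fun x => ENNReal.ofReal (w' x)) with hμ'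
  have hμap : ∀ S : Set ℂ, MeasurableSet S → μ' S = wInt w' S := by
    intro S hS
    rw [hμ', withDensity_apply _ hS]
    rfl
  set QG : Set ℂ := {x ∈ Q | lam * α * w' x < 1} with hQG
  have hQGm : MeasurableSet QG :=
    hQm.inter (measurableSet_lt (hw'm.const_mul _) measurable_const)
  have hQGsub : QG ⊆ unitDisc := (Set.sep_subset _ _).trans hQsub
  -- transfer of the right-hand side back to w
  have hwint_final : wInt w {x ∈ Q | lam * α * w x < 1} = wInt w' QG := by
    have hnull : volume ({x | w x ≠ w' x} ∩ unitDisc) = 0 := by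
      rw [← Measure.restrict_apply' hDmeas]
      exact hae
    have hsub1 : {x ∈ Q | lam * α * w x < 1} \ QG ⊆ {x | w x ≠ w' x} ∩ unitDisc := by
      rintro x ⟨⟨hxQ, hx1⟩, hx2⟩
      refine ⟨?_, hQsub hxQ⟩
      intro hcon
      exact hx2 ⟨hxQ, by rw [← hcon]; exact hx1⟩
    have hsub2 : QG \ {x ∈ Q | lam * α * w x < 1} ⊆ {x | w x ≠ w' x} ∩ unitDisc := by
      rintro x ⟨⟨hxQ, hx1⟩, hx2⟩
      refine ⟨?_, hQsub hxQ⟩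
      intro hcon
      exact hx2 ⟨hxQ, by rw [hcon]; exact hx1⟩
    have haeeq : {x ∈ Q | lam * α * w x < 1} =ᵐ[volume] QG := by
      rw [MeasureTheory.ae_eq_set]
      exact ⟨measure_mono_null hsub1 hnull, measure_mono_null hsub2 hnull⟩
    calc wInt w {x ∈ Q | lam * α * w x < 1}
        = wInt w' {x ∈ Q | lam * α * w x < 1} :=
          hwInt_congr _ ((Set.sep_subset _ _).trans hQsub)
      _ = wInt w' QG := by
          unfold wInt
          rw [Measure.restrict_congr_set haeeq]
  -- final computation
  have hcoef_eq : ENNReal.ofReal (C * lam / (1 - β)) = coef := by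
    rw [hcoef, div_eq_mul_inv, ENNReal.ofReal_mul (by positivity : (0:ℝ) ≤ C * lam),
      ENNReal.ofReal_mul (by positivity : (0:ℝ) ≤ C),
      ENNReal.ofReal_inv_of_pos (by linarith : (0:ℝ) < 1 - β)]
    ring
  rw [hcoef_eq, hwint_final]
  calc volume {x ∈ Q | ENNReal.ofReal lam < (dyadicMinE a ℓ w x)⁻¹}
      ≤ volume (⋃ p ∈ Sel, dyadicBox a ℓ p.1 p.2) := measure_mono hcover
    _ ≤ ∑' (p : Sel), volume (dyadicBox a ℓ (p : ℕ × ℕ).1 (p : ℕ × ℕ).2) :=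
        measure_biUnion_le volume (Set.to_countable Sel) _
    _ ≤ ∑' (p : Sel), coef * wInt w' (good p) :=
        ENNReal.tsum_le_tsum (fun p => hperbox p p.2)
    _ = coef * ∑' (p : Sel), wInt w' (good p) := ENNReal.tsum_mul_left
    _ = coef * ∑' (p : Sel), μ' (good p) := by
        congr 1
        exact tsum_congr fun p => (hμap _ (hgoodm p)).symm
    _ = coef * μ' (⋃ p ∈ Sel, good p) := by
        rw [measure_biUnion (Set.to_countable Sel) hgooddisj (fun p _ => hgoodm p)]
    _ ≤ coef * μ' QG := by
        apply mul_le_mul_right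
        apply measure_mono
        intro x hx
        simp only [mem_iUnion] at hx
        obtain ⟨p, hp, hxp⟩ := hx
        exact ⟨hdbQ p.1 p.2 (hp.1) hxp.1, hxp.2⟩
    _ = coef * wInt w' QG := by rw [hμap _ hQGm]
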